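/- Let n be a composite integer with n ≥ 4, and let n = c·x be a factorization of n into positive integers with c ≥ 2, x ≥ 2, and gcd(c,x) = 1. Then there exists exactly one pair of positive integers (y,d) with y < x and d < c such that, setting m = c·y, a = y·d, b = x·d, one has b = n − m + 1; and for this pair there exists an (a,b)-regular bipartite graph of order (n,m). The pair is given by the unique solution of the Bézout identity d·x − (x−y)·c = 1 with 0 < d < c and 0 < x−y < x. -/
import Mathlib


/-- There exists an `(a,b)`-regular bipartite graph of order `(n,m)`: a set of edges
between color classes `U` (of size `n`) and `V` (of size `m`) such that every vertex of `U`
has degree `a` and every vertex of `V` has degree `b`. -/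
def ExistsBiregular (n m a b : ℕ) : Prop :=
  ∃ E : Finset (Fin n × Fin m),
    (∀ u : Fin n, (E.filter (fun e => e.1 = u)).card = a) ∧
    (∀ v : Fin m, (E.filter (fun e => e.2 = v)).card = b)


lemma card_filter_div (N a u : ℕ) (ha : 0 < a) (hu : (u + 1) * a ≤ N) :
    ((Finset.univ : Finset (Fin N)).filter (fun t => t.val / a = u)).card = a := by
  have key : ((Finset.univ : Finset (Fin N)).filter (fun t => t.val / a = u)).card
      = (Finset.range a).card := by
    apply Finset.card_bij' (fun t _ => t.val - u * a)
      (fun i hi => (⟨u * a + i, by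
        have : i < a := Finset.mem_range.mp hi
        calc u * a + i < u * a + a := by omega
          _ = (u + 1) * a := by ring
          _ ≤ N := hu⟩ : Fin N))
    case hi =>
      intro t ht
      simp only [Finset.mem_filter] at ht
      have h1 := Nat.div_add_mod t.val a
      have h2 := Nat.mod_lt t.val ha
      rw [ht.2] at h1
      have hau : a * u = u * a := Nat.mul_comm a u
      rw [Finset.mem_range]
      omega
    case hj =>
      intro i hi
      have hia : i < a := Finset.mem_range.mp hi
      simp only [Finset.mem_filter, Finset.mem_univ, true_and]
      show (u * a + i) / a = u
      rw [Nat.mul_comm u a, Nat.mul_add_div ha, Nat.div_eq_of_lt hia, Nat.add_zero]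
    case left_inv =>
      intro t ht
      simp only [Finset.mem_filter] at ht
      have h1 := Nat.div_add_mod t.val a
      rw [ht.2] at h1
      have hau : a * u = u * a := Nat.mul_comm a u
      apply Fin.ext
      simp only
      omega
    case right_inv =>
      intro i hi
      simp only [Nat.add_sub_cancel_left]
  rw [key, Finset.card_range]

lemma card_filter_mod (N m v b : ℕ) (hm : 0 < m) (hv : v < m) (hN : N = m * b) :
    ((Finset.univ : Finset (Fin N)).filter (fun t => t.val % m = v)).card = b := by
  have key : ((Finset.univ : Finset (Fin N)).filter (fun t => t.val % m = v)).card
      = (Finset.range b).card := by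
    apply Finset.card_bij' (fun t _ => t.val / m)
      (fun k hk => (⟨v + k * m, by
        have hkb : k < b := Finset.mem_range.mp hk
        have h1 : k * m + m ≤ b * m := by
          calc k * m + m = (k + 1) * m := by ring
            _ ≤ b * m := Nat.mul_le_mul_right m hkb
        have h2 : m * b = b * m := Nat.mul_comm m b
        omega⟩ : Fin N))
    case hi =>
      intro t ht
      rw [Finset.mem_range]
      have htN : t.val < m * b := by rw [← hN]; exact t.isLt
      rw [Nat.mul_comm] at htN
      exact Nat.div_lt_iff_lt_mul hm |>.mpr htN
    case hj =>
      intro k hk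
      simp only [Finset.mem_filter, Finset.mem_univ, true_and]
      show (v + k * m) % m = v
      rw [Nat.add_mul_mod_self_right, Nat.mod_eq_of_lt hv]
    case left_inv =>
      intro t ht
      simp only [Finset.mem_filter] at ht
      have h1 := Nat.div_add_mod t.val m
      rw [ht.2] at h1
      have hmc : m * (t.val / m) = t.val / m * m := Nat.mul_comm m (t.val / m)
      apply Fin.ext
      simp only
      omega
    case right_inv =>
      intro k hk
      show (v + k * m) / m = k
      rw [Nat.add_mul_div_right _ _ hm, Nat.div_eq_of_lt hv, Nat.zero_add]
  rw [key, Finset.card_range]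

lemma existsBiregular_of (n m a b : ℕ) (ha : 0 < a) (ham : a ≤ m) (h : n * a = m * b) :
    ExistsBiregular n m a b := by
  have hm : 0 < m := lt_of_lt_of_le ha ham
  let f : Fin (n * a) → Fin n × Fin m := fun t =>
    (⟨t.val / a, by
      exact Nat.div_lt_iff_lt_mul ha |>.mpr t.isLt⟩,
     ⟨t.val % m, Nat.mod_lt _ hm⟩)
  have hfinj : Function.Injective f := by
    intro t t' htt
    simp only [f, Prod.mk.injEq, Fin.mk.injEq] at htt
    obtain ⟨h1, h2⟩ := htt
    have e1 := Nat.div_add_mod t.val a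
    have e2 := Nat.div_add_mod t'.val a
    have r1 := Nat.mod_lt t.val ha
    have r2 := Nat.mod_lt t'.val ha
    rw [h1] at e1
    have hdvd : (m : ℤ) ∣ (t'.val : ℤ) - t.val := (Nat.modEq_iff_dvd (n := m)).mp h2
    obtain ⟨k, hk⟩ := hdvd
    have hma : (a : ℤ) ≤ m := by exact_mod_cast ham
    have hdiff1 : ((t'.val : ℤ)) - t.val < a := by
      have := e1; have := e2; push_cast; omega
    have hdiff2 : -(a : ℤ) < ((t'.val : ℤ)) - t.val := by push_cast; omega
    have hk0 : k = 0 := by nlinarith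
    apply Fin.ext
    rw [hk0, Int.mul_zero] at hk
    omega
  refine ⟨Finset.univ.image f, fun u => ?_, fun v => ?_⟩
  · rw [Finset.filter_image, Finset.card_image_of_injective _ hfinj]
    rw [show Finset.filter (fun t : Fin (n*a) => ((f t).1 = u)) Finset.univ
        = Finset.filter (fun t : Fin (n*a) => t.val / a = u.val) Finset.univ from
      Finset.filter_congr (fun t _ => by simp [f, Fin.ext_iff])]
    exact card_filter_div (n * a) a u.val ha (Nat.mul_le_mul_right a u.isLt)
  · rw [Finset.filter_image, Finset.card_image_of_injective _ hfinj]
    rw [show Finset.filter (fun t : Fin (n*a) => ((f t).2 = v)) Finset.univ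
        = Finset.filter (fun t : Fin (n*a) => t.val % m = v.val) Finset.univ from
      Finset.filter_congr (fun t _ => by simp [f, Fin.ext_iff])]
    exact card_filter_mod (n * a) m v.val b hm v.isLt h

/-- **Proposition (n_existence_2).** Let `n ≥ 4` be composite and let `n = c·x` be a
factorization into positive integers with `c ≥ 2`, `x ≥ 2`, and `gcd(c,x) = 1`. Then there
exists exactly one pair of positive integers `(y,d)` with `y < x` and `d < c` such that,
setting `m = c·y`, `a = y·d`, `b = x·d`, one has `b = n − m + 1`; and for this pair there
exists an `(a,b)`-regular bipartite graph of order `(n,m)`. The pair is given by the unique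
solution of the Bézout identity `d·x − (x−y)·c = 1` with `0 < d < c` and `0 < x−y < x`. -/
theorem stmt_14 (n c x : ℕ) (hn4 : 4 ≤ n) (hc : 2 ≤ c) (hx : 2 ≤ x)
    (hn : n = c * x) (hcop : Nat.Coprime c x) :
    (∃! p : ℕ × ℕ, 0 < p.1 ∧ p.1 < x ∧ 0 < p.2 ∧ p.2 < c ∧
      x * p.2 = c * x - c * p.1 + 1) ∧
    (∀ y d : ℕ, 0 < y → y < x → 0 < d → d < c →
      x * d = c * x - c * y + 1 →
      ExistsBiregular (c * x) (c * y) (y * d) (x * d) ∧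
      (d : ℤ) * (x : ℤ) - ((x : ℤ) - (y : ℤ)) * (c : ℤ) = 1) := by
  have hc1 : 1 < c := hc
  haveI : NeZero c := ⟨by omega⟩
  haveI : Fact (1 < c) := ⟨hc1⟩
  constructor
  · -- existence and uniqueness
    set U : (ZMod c)ˣ := ZMod.unitOfCoprime x hcop.symm with hU
    set d := ((U⁻¹ : (ZMod c)ˣ) : ZMod c).val with hd
    have hdc : d < c := ZMod.val_lt _
    have hdcast : ((d : ℕ) : ZMod c) = ((U⁻¹ : (ZMod c)ˣ) : ZMod c) := by
      rw [hd, ZMod.natCast_val, ZMod.cast_id]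
    have hd0 : 0 < d := by
      rcases Nat.eq_zero_or_pos d with h0 | h
      · exfalso
        apply Units.ne_zero (U⁻¹)
        rw [← hdcast, h0, Nat.cast_zero]
      · exact h
    have hxd : ((x * d : ℕ) : ZMod c) = 1 := by
      push_cast
      rw [hdcast, show (x : ZMod c) = (U : ZMod c) from (ZMod.coe_unitOfCoprime x hcop.symm).symm]
      exact_mod_cast U.mul_inv
    have hmod : (x * d) % c = 1 := by
      have h1 : x * d ≡ 1 [MOD c] := (ZMod.natCast_eq_natCast_iff (x * d) 1 c).mp
        (by rw [hxd]; simp)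
      have := h1
      unfold Nat.ModEq at this
      rwa [Nat.mod_eq_of_lt hc1] at this
    set q := x * d / c with hq
    have hqe : c * q + 1 = x * d := by
      conv_rhs => rw [← Nat.div_add_mod (x * d) c]
      rw [hmod]
    have hxd2 : 2 ≤ x * d := by
      calc 2 = 2 * 1 := by ring
        _ ≤ x * d := Nat.mul_le_mul hx hd0
    have hq1 : 1 ≤ q := by
      rcases Nat.eq_zero_or_pos q with h0 | h
      · rw [h0, Nat.mul_zero] at hqe; omega
      · exact h
    have hqx : q < x := by
      have h1 : x * d ≤ x * (c - 1) := Nat.mul_le_mul_left x (by omega)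
      have h2 : x * (c - 1) = x * c - x * 1 := Nat.mul_sub x c 1
      have h3 : x * 1 = x := Nat.mul_one x
      have h4 : x ≤ x * c := Nat.le_mul_of_pos_right x (by omega)
      have h5 : c * q < c * x := by
        have hcx : c * x = x * c := Nat.mul_comm c x
        omega
      exact Nat.lt_of_mul_lt_mul_left h5
    have key : ∀ y' d' : ℕ, 0 < y' → y' < x → 0 < d' → d' < c →
        x * d' = c * x - c * y' + 1 → d' = d ∧ y' = x - q := by
      intro y' d' hy'0 hy'x hd'0 hd'c heq'
      have hcy' : c * y' ≤ c * x := Nat.mul_le_mul_left c (le_of_lt hy'x)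
      have hsub : c * (x - y') = c * x - c * y' := Nat.mul_sub c x y'
      have heq2 : x * d' = c * (x - y') + 1 := by omega
      have hmod' : (x * d') % c = 1 := by
        rw [heq2, Nat.mul_add_mod, Nat.mod_eq_of_lt hc1]
      have hcong : x * d' ≡ x * d [MOD c] := by
        unfold Nat.ModEq; rw [hmod, hmod']
      have hdd : d' ≡ d [MOD c] := Nat.ModEq.cancel_left_of_coprime hcop hcong
      have hdd' : d' = d := by
        have := hdd
        unfold Nat.ModEq at this
        rwa [Nat.mod_eq_of_lt hd'c, Nat.mod_eq_of_lt hdc] at this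
      refine ⟨hdd', ?_⟩
      have hxdq : x * d' = c * q + 1 := by rw [hdd']; omega
      have : c * y' = c * (x - q) := by
        have hsub2 : c * (x - q) = c * x - c * q := Nat.mul_sub c x q
        have hcq : c * q ≤ c * x := Nat.mul_le_mul_left c (le_of_lt hqx)
        omega
      have := Nat.eq_of_mul_eq_mul_left (by omega : 0 < c) this
      omega
    refine ⟨(x - q, d), ⟨by omega, by omega, hd0, hdc, ?_⟩, ?_⟩
    · show x * d = c * x - c * (x - q) + 1
      have hsub : c * (x - q) = c * x - c * q := Nat.mul_sub c x q
      have hcq : c * q ≤ c * x := Nat.mul_le_mul_left c (le_of_lt hqx)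
      omega
    · rintro ⟨y', d'⟩ ⟨h1, h2, h3, h4, h5⟩
      obtain ⟨e1, e2⟩ := key y' d' h1 h2 h3 h4 h5
      simp only [Prod.mk.injEq]
      exact ⟨e2, e1⟩
  · -- graph existence and Bezout
    intro y d hy0 hyx hd0 hdc heq
    have hcyx : c * y ≤ c * x := Nat.mul_le_mul_left c (le_of_lt hyx)
    constructor
    · apply existsBiregular_of
      · exact Nat.mul_pos hy0 hd0
      · calc y * d ≤ y * c := Nat.mul_le_mul_left y (le_of_lt hdc)
          _ = c * y := Nat.mul_comm y c
      · ring
    · have hsub : c * (x - y) = c * x - c * y := Nat.mul_sub c x y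
      have heq2 : x * d = c * (x - y) + 1 := by omega
      have hle : (y : ℤ) ≤ x := by exact_mod_cast le_of_lt hyx
      have : (x : ℤ) * d = c * ((x : ℤ) - y) + 1 := by
        have := heq2
        zify [le_of_lt hyx] at this
        linarith
      linarith [this]
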